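/- arXiv:2512.18898 — 4 statements merged into one kernel-verified Lean document; each statement's English description precedes it below -/
import Mathlib

section
/- Let a, b, c be real numbers with c > 0. (i) If |a² − b²| > c, then |a − b| > √(b² + c) − |b|. (ii) If b ≠ 0, then √(b² + c) − |b| ≥ (√2 − 1)·min(√c, c/|b|); if b = 0, then √(b² + c) − |b| = √c, so in particular √(b² + c) − |b| ≥ (√2 − 1)·√c. -/
/-!
For (i), `|a² − b²| = |a − b|·|a + b| ≤ |a − b|·(|a − b| + 2|b|) = (|a − b| + |b|)² − b²`,
so `b² + c < (|a − b| + |b|)²`. For (ii), rationalise: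
`√(b² + c) − |b| = c / (√(b² + c) + |b|)`. With `M = max(√c, |b|)` we have `b² + c ≤ 2M²`,
so the denominator is at most `(√2 + 1)M`, while `c / M ≥ min(√c, c/|b|)` and
`1/(√2 + 1) = √2 − 1`.
-/

open Real

namespace SquareDiff

theorem abs_sq_sub_sq_le (a b : ℝ) : |a ^ 2 - b ^ 2| ≤ (|a - b| + |b|) ^ 2 - b ^ 2 := by
  have hadd : |a + b| ≤ |a - b| + 2 * |b| := by
    calc |a + b| = |(a - b) + 2 * b| := by ring_nf
      _ ≤ |a - b| + |2 * b| := abs_add_le _ _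
      _ = |a - b| + 2 * |b| := by rw [abs_mul, abs_two]
  calc |a ^ 2 - b ^ 2| = |a - b| * |a + b| := by rw [← abs_mul]; ring_nf
    _ ≤ |a - b| * (|a - b| + 2 * |b|) := mul_le_mul_of_nonneg_left hadd (abs_nonneg _)
    _ = (|a - b| + |b|) ^ 2 - b ^ 2 := by rw [← sq_abs b]; ring

theorem sqrt_sq_add_sub_abs_lt_abs_sub {a b c : ℝ} (hc : 0 ≤ c) (h : c < |a ^ 2 - b ^ 2|) :
    √(b ^ 2 + c) - |b| < |a - b| := by
  have hlt : b ^ 2 + c < (|a - b| + |b|) ^ 2 := by linarith [abs_sq_sub_sq_le a b]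
  have := sqrt_lt_sqrt (by positivity) hlt
  rw [sqrt_sq (by positivity)] at this
  linarith

theorem sqrt_sq_add_sub_abs_eq_div (b : ℝ) {c : ℝ} (hc : 0 < c) :
    √(b ^ 2 + c) - |b| = c / (√(b ^ 2 + c) + |b|) := by
  have hpos : 0 < √(b ^ 2 + c) + |b| := by positivity
  rw [eq_div_iff hpos.ne']
  linear_combination sq_sqrt (by positivity : 0 ≤ b ^ 2 + c) - sq_abs b

theorem sqrt_sq_add_add_abs_le (b : ℝ) {c : ℝ} (hc : 0 ≤ c) :
    √(b ^ 2 + c) + |b| ≤ (√2 + 1) * max √c |b| := by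
  set M := max √c |b|
  have hbM : |b| ≤ M := le_max_right _ _
  have hsq : b ^ 2 + c ≤ 2 * M ^ 2 := by
    have hcM : c ≤ M ^ 2 := by
      rw [← sq_sqrt hc]
      exact pow_le_pow_left₀ (sqrt_nonneg c) (le_max_left _ _) 2
    have hbM2 : b ^ 2 ≤ M ^ 2 := by
      rw [← sq_abs b]
      exact pow_le_pow_left₀ (abs_nonneg b) hbM 2
    linarith
  have hsqrt : √(b ^ 2 + c) ≤ √2 * M := by
    calc √(b ^ 2 + c) ≤ √(2 * M ^ 2) := sqrt_le_sqrt hsq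
      _ = √2 * M := by rw [sqrt_mul zero_le_two, sqrt_sq ((abs_nonneg b).trans hbM)]
  linarith

theorem min_sqrt_div_abs_le_div_max (b c : ℝ) :
    min √c (c / |b|) ≤ c / max √c |b| := by
  rcases max_cases √c |b| with ⟨hM, -⟩ | ⟨hM, -⟩
  · rw [hM, div_sqrt]
    exact min_le_left _ _
  · rw [hM]
    exact min_le_right _ _

theorem sqrt_two_sub_one_mul_min_le (b : ℝ) {c : ℝ} (hc : 0 < c) :
    (√2 - 1) * min √c (c / |b|) ≤ √(b ^ 2 + c) - |b| := by
  have hsqrt2 : (√2 - 1) * (√2 + 1) = 1 := by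
    linear_combination sq_sqrt zero_le_two
  have hsqrt2_sub : 0 ≤ √2 - 1 := by
    rw [sub_nonneg, ← sqrt_one]; exact sqrt_le_sqrt one_le_two
  calc (√2 - 1) * min √c (c / |b|)
      ≤ (√2 - 1) * (c / max √c |b|) :=
        mul_le_mul_of_nonneg_left (min_sqrt_div_abs_le_div_max b c) hsqrt2_sub
    _ = c / ((√2 + 1) * max √c |b|) := by
        field_simp
        exact hsqrt2
    _ ≤ c / (√(b ^ 2 + c) + |b|) :=
        div_le_div_of_nonneg_left hc.le (by positivity) (sqrt_sq_add_add_abs_le b hc.le)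
    _ = √(b ^ 2 + c) - |b| := (sqrt_sq_add_sub_abs_eq_div b hc).symm

end SquareDiff

/-- **Elementary inequality for differences of squares** (Lemma S3).
Let `a, b, c` be real with `c > 0`.
(i) If `|a² − b²| > c` then `|a − b| > √(b² + c) − |b|`.
(ii) If `b ≠ 0` then `√(b² + c) − |b| ≥ (√2 − 1)·min(√c, c/|b|)`.
(iii) If `b = 0` then `√(b² + c) − |b| = √c`, so in particular
`√(b² + c) − |b| ≥ (√2 − 1)·√c`. -/
theorem square_diff_inequality (a b c : ℝ) (hc : 0 < c) :
    (c < |a ^ 2 - b ^ 2| → Real.sqrt (b ^ 2 + c) - |b| < |a - b|) ∧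
    (b ≠ 0 →
      (Real.sqrt 2 - 1) * min (Real.sqrt c) (c / |b|) ≤ Real.sqrt (b ^ 2 + c) - |b|) ∧
    (b = 0 → Real.sqrt (b ^ 2 + c) - |b| = Real.sqrt c) ∧
    (b = 0 → (Real.sqrt 2 - 1) * Real.sqrt c ≤ Real.sqrt (b ^ 2 + c) - |b|) := by
  have hb0 : √((0 : ℝ) ^ 2 + c) - |0| = √c := by simp
  refine ⟨SquareDiff.sqrt_sq_add_sub_abs_lt_abs_sub hc.le,
    fun _ => SquareDiff.sqrt_two_sub_one_mul_min_le b hc, fun hb => hb ▸ hb0, fun hb => ?_⟩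
  subst hb
  rw [hb0]
  have hsqrt2_le : √2 ≤ 2 := by
    rw [sqrt_le_left zero_le_two]; norm_num
  nlinarith [sqrt_nonneg c]
end

section
/- For every bounded measurable Q : 𝒳 → ℝ: E[H(Q)(V)] = 0 and E[H(Q)(V)²] = E[((1 − π(X))/π(X))·(Q(X) − Q_#(X))²]; moreover (τ/(1 − τ))·‖Q − Q_#‖₂² ≤ E[H(Q)(V)²] ≤ ((1 − τ)/τ)·‖Q − Q_#‖₂². -/
/-! Write `I = 1{A = a}`, `p = π(X)` and `g = (Q - Q_#)(X)`, so that `H(Q)(V) = (1 - I / p) g`.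
Since `E[I | X] = p`, the weight `1 - I / p` is orthogonal to every integrable function of `X`,
which gives the mean. Since `I² = I`, `(1 - I / p)² = (1 - p) / p + (1 - I / p) (2 - 1 / p)`, so
the second moment is `E[(1 - p) / p · g²]`, and `τ ≤ p ≤ 1 - τ` traps `(1 - p) / p` between
`τ / (1 - τ)` and `(1 - τ) / τ`. -/

open MeasureTheory ProbabilityTheory

noncomputable section

/-- The AIPW transformation `T(Q)(x, a′, y) = 1{a′=a}·(y − Q(x))/π(x) + Q(x)`. -/
def Taipw {𝒳 : Type*} (ps : 𝒳 → ℝ) (a : Bool) (Q : 𝒳 → ℝ) (v : 𝒳 × Bool × ℝ) : ℝ :=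
  (if v.2.1 = a then (1 : ℝ) else 0) * (v.2.2 - Q v.1) / ps v.1 + Q v.1

/-- `H(Q)(x, a′, y) = (1 − 1{a′=a}/π(x))·(Q(x) − Q_#(x)) = T(Q) − T(Q_#)`. -/
def Haipw {𝒳 : Type*} (ps : 𝒳 → ℝ) (a : Bool) (Qref Q : 𝒳 → ℝ) (v : 𝒳 × Bool × ℝ) : ℝ :=
  (1 - (if v.2.1 = a then (1 : ℝ) else 0) / ps v.1) * (Q v.1 - Qref v.1)

theorem integral_mul_condExp_eq_integral_mul {Ω : Type*} {m m₀ : MeasurableSpace Ω}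
    {μ : Measure Ω} (hm : m ≤ m₀) [SigmaFinite (μ.trim hm)] {f g : Ω → ℝ}
    (hf : AEStronglyMeasurable[m] f μ) (hfg : Integrable (f * g) μ) (hg : Integrable g μ) :
    ∫ ω, f ω * μ[g | m] ω ∂μ = ∫ ω, f ω * g ω ∂μ :=
  calc ∫ ω, f ω * μ[g | m] ω ∂μ = ∫ ω, μ[f * g | m] ω ∂μ :=
        integral_congr_ae (condExp_mul_of_aestronglyMeasurable_left hf hfg hg).symm
    _ = ∫ ω, f ω * g ω ∂μ := integral_condExp hm

lemma one_sub_div_sq_mul_eq {i p y : ℝ} (hi : i * i = i) (hp : p ≠ 0) :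
    (1 - i / p) ^ 2 * y = (1 - p) / p * y + (1 - i / p) * (2 * y - y / p) := by
  field_simp
  linear_combination y * hi

lemma one_sub_div_mem_Icc {τ p : ℝ} (hτ : 0 < τ) (hp : p ∈ Set.Icc τ (1 - τ)) :
    (1 - p) / p ∈ Set.Icc (τ / (1 - τ)) ((1 - τ) / τ) := by
  obtain ⟨hτp, hp1⟩ := hp
  exact ⟨div_le_div₀ (by linarith) (by linarith) (hτ.trans_le hτp) hp1,
    div_le_div₀ (by linarith) (by linarith) hτ hτp⟩

section Integrability

variable {Ω : Type*} [MeasurableSpace Ω] {P : Measure Ω} {f I r : Ω → ℝ} {τ C : ℝ}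

lemma MeasureTheory.Integrable.div_of_le (hf : Integrable f P) (hr : Measurable r) (hτ : 0 < τ)
    (hrτ : ∀ ω, τ ≤ r ω) : Integrable (fun ω => f ω / r ω) P := by
  simp_rw [div_eq_mul_inv]
  refine hf.mul_bdd (c := τ⁻¹) hr.inv.aestronglyMeasurable (ae_of_all _ fun ω => ?_)
  rw [norm_inv, Real.norm_of_nonneg (hτ.trans_le (hrτ ω)).le]
  exact inv_anti₀ hτ (hrτ ω)

lemma MeasureTheory.Integrable.one_sub_div_mul (hf : Integrable f P) (hr : Measurable r)
    (hτ : 0 < τ) (hrτ : ∀ ω, τ ≤ r ω) (hI : AEStronglyMeasurable I P) (hIb : ∀ᵐ ω ∂P, ‖I ω‖ ≤ C) :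
    Integrable (fun ω => (1 - I ω / r ω) * f ω) P := by
  refine (hf.sub ((hf.div_of_le hr hτ hrτ).bdd_mul hI hIb)).congr (ae_of_all _ fun ω => ?_)
  simp only [Pi.sub_apply]
  ring

lemma MeasureTheory.Integrable.one_sub_div_mul_of_le (hf : Integrable f P) (hr : Measurable r)
    (hτ : 0 < τ) (hrτ : ∀ ω, τ ≤ r ω) : Integrable (fun ω => (1 - r ω) / r ω * f ω) P := by
  refine ((hf.div_of_le hr hτ hrτ).sub hf).congr (ae_of_all _ fun ω => ?_)
  simp only [Pi.sub_apply]
  field_simp [(hτ.trans_le (hrτ ω)).ne']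

lemma integral_one_sub_div_mul_mem_Icc (hf : Integrable f P) (hf0 : 0 ≤ f) (hr : Measurable r)
    (hτ : 0 < τ) (hrτ : ∀ ω, r ω ∈ Set.Icc τ (1 - τ)) :
    ∫ ω, (1 - r ω) / r ω * f ω ∂P ∈
      Set.Icc (τ / (1 - τ) * ∫ ω, f ω ∂P) ((1 - τ) / τ * ∫ ω, f ω ∂P) := by
  have hodds : Integrable (fun ω => (1 - r ω) / r ω * f ω) P :=
    hf.one_sub_div_mul_of_le hr hτ fun ω => (hrτ ω).1
  rw [← integral_const_mul, ← integral_const_mul]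
  exact ⟨integral_mono (hf.const_mul _) hodds fun ω =>
      mul_le_mul_of_nonneg_right (one_sub_div_mem_Icc hτ (hrτ ω)).1 (hf0 ω),
    integral_mono hodds (hf.const_mul _) fun ω =>
      mul_le_mul_of_nonneg_right (one_sub_div_mem_Icc hτ (hrτ ω)).2 (hf0 ω)⟩

end Integrability

section Propensity

variable {𝒳 Ω : Type*} [MeasurableSpace 𝒳] [MeasurableSpace Ω] {P : Measure Ω} [IsFiniteMeasure P]
  {X : Ω → 𝒳} {I : Ω → ℝ} {ps φ : 𝒳 → ℝ} {τ C : ℝ}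

lemma integral_mul_comp_eq_of_condExp_eq (hX : Measurable X) (hI : Integrable I P)
    (hprop : P[I | MeasurableSpace.comap X inferInstance] =ᵐ[P] fun ω => ps (X ω))
    (hφ : Measurable φ) (hIφ : Integrable (fun ω => I ω * φ (X ω)) P) :
    ∫ ω, I ω * φ (X ω) ∂P = ∫ ω, ps (X ω) * φ (X ω) ∂P := by
  have hφX : StronglyMeasurable[MeasurableSpace.comap X inferInstance] fun ω => φ (X ω) :=
    (hφ.comp (comap_measurable X)).stronglyMeasurable
  have hφXI : Integrable ((fun ω => φ (X ω)) * I) P :=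
    hIφ.congr (ae_of_all _ fun ω => mul_comm (I ω) (φ (X ω)))
  simp only [mul_comm (ps _), mul_comm (I _)]
  rw [← integral_mul_condExp_eq_integral_mul hX.comap_le hφX.aestronglyMeasurable hφXI hI]
  exact integral_congr_ae (hprop.mono fun ω h => congrArg (φ (X ω) * ·) h)

lemma integral_one_sub_div_mul_eq_zero (hX : Measurable X) (hps : Measurable ps) (hτ : 0 < τ)
    (hpsτ : ∀ x, τ ≤ ps x) (hI : AEStronglyMeasurable I P) (hIb : ∀ᵐ ω ∂P, ‖I ω‖ ≤ C)
    (hprop : P[I | MeasurableSpace.comap X inferInstance] =ᵐ[P] fun ω => ps (X ω))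
    (hφm : Measurable φ) (hφ : Integrable (fun ω => φ (X ω)) P) :
    ∫ ω, (1 - I ω / ps (X ω)) * φ (X ω) ∂P = 0 := by
  have hIφ : Integrable (fun ω => I ω * (φ (X ω) / ps (X ω))) P :=
    (hφ.div_of_le (hps.comp hX) hτ fun ω => hpsτ (X ω)).bdd_mul hI hIb
  calc ∫ ω, (1 - I ω / ps (X ω)) * φ (X ω) ∂P
      = ∫ ω, φ (X ω) ∂P - ∫ ω, I ω * (φ (X ω) / ps (X ω)) ∂P := by
        rw [← integral_sub hφ hIφ]
        congr with ω
        ring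
    _ = ∫ ω, φ (X ω) ∂P - ∫ ω, ps (X ω) * (φ (X ω) / ps (X ω)) ∂P := by
        rw [integral_mul_comp_eq_of_condExp_eq hX (.of_bound hI C hIb) hprop
          (φ := fun x => φ x / ps x) (hφm.div hps) hIφ]
    _ = 0 := by
        rw [sub_eq_zero]
        congr with ω
        field_simp [(hτ.trans_le (hpsτ (X ω))).ne']

lemma integral_one_sub_div_sq_mul_eq (hX : Measurable X) (hps : Measurable ps) (hτ : 0 < τ)
    (hpsτ : ∀ x, τ ≤ ps x) (hI : AEStronglyMeasurable I P) (hIb : ∀ᵐ ω ∂P, ‖I ω‖ ≤ C)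
    (hIidem : ∀ ω, I ω * I ω = I ω)
    (hprop : P[I | MeasurableSpace.comap X inferInstance] =ᵐ[P] fun ω => ps (X ω))
    (hφm : Measurable φ) (hφ : Integrable (fun ω => φ (X ω)) P) :
    ∫ ω, (1 - I ω / ps (X ω)) ^ 2 * φ (X ω) ∂P
      = ∫ ω, (1 - ps (X ω)) / ps (X ω) * φ (X ω) ∂P := by
  have hr : Measurable fun ω => ps (X ω) := hps.comp hX
  have hψ : Integrable (fun ω => 2 * φ (X ω) - φ (X ω) / ps (X ω)) P :=
    (hφ.const_mul 2).sub (hφ.div_of_le hr hτ fun ω => hpsτ (X ω))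
  calc ∫ ω, (1 - I ω / ps (X ω)) ^ 2 * φ (X ω) ∂P
      = ∫ ω, ((1 - ps (X ω)) / ps (X ω) * φ (X ω)
          + (1 - I ω / ps (X ω)) * (2 * φ (X ω) - φ (X ω) / ps (X ω))) ∂P := by
        congr with ω
        exact one_sub_div_sq_mul_eq (hIidem ω) (hτ.trans_le (hpsτ (X ω))).ne'
    _ = ∫ ω, (1 - ps (X ω)) / ps (X ω) * φ (X ω) ∂P := by
        rw [integral_add (hφ.one_sub_div_mul_of_le hr hτ fun ω => hpsτ (X ω))
            (hψ.one_sub_div_mul hr hτ (fun ω => hpsτ (X ω)) hI hIb),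
          integral_one_sub_div_mul_eq_zero (φ := fun x => 2 * φ x - φ x / ps x) hX hps hτ hpsτ
            hI hIb hprop (by fun_prop) hψ, add_zero]

end Propensity

theorem H_mean_var_general {𝒳 Ω : Type*} [MeasurableSpace 𝒳] [MeasurableSpace Ω]
    (P : Measure Ω) [IsProbabilityMeasure P]
    (X : Ω → 𝒳) (A : Ω → Bool) (Y : Ω → ℝ)
    (hX : Measurable X) (hA : Measurable A)
    (a : Bool) (ps : 𝒳 → ℝ) (hps : Measurable ps)
    (τ : ℝ) (hτ : 0 < τ)
    (hpos : ∀ x, τ ≤ ps x ∧ ps x ≤ 1 - τ)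
    (hprop : P[(fun ω => if A ω = a then (1 : ℝ) else 0) |
        MeasurableSpace.comap X inferInstance] =ᵐ[P] fun ω => ps (X ω))
    (Qref : 𝒳 → ℝ) (hQrefm : Measurable Qref)
    (Mref : ℝ) (hQrefb : ∀ x, |Qref x| ≤ Mref)
    (Q : 𝒳 → ℝ) (hQm : Measurable Q) (M : ℝ) (hQb : ∀ x, |Q x| ≤ M) :
    (∫ ω, Haipw ps a Qref Q (X ω, A ω, Y ω) ∂P) = 0 ∧
    (∫ ω, (Haipw ps a Qref Q (X ω, A ω, Y ω)) ^ 2 ∂P)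
      = (∫ ω, ((1 - ps (X ω)) / ps (X ω)) * (Q (X ω) - Qref (X ω)) ^ 2 ∂P) ∧
    (τ / (1 - τ)) * (∫ ω, (Q (X ω) - Qref (X ω)) ^ 2 ∂P)
      ≤ (∫ ω, (Haipw ps a Qref Q (X ω, A ω, Y ω)) ^ 2 ∂P) ∧
    (∫ ω, (Haipw ps a Qref Q (X ω, A ω, Y ω)) ^ 2 ∂P)
      ≤ ((1 - τ) / τ) * (∫ ω, (Q (X ω) - Qref (X ω)) ^ 2 ∂P) := by
  have hpsτ : ∀ x, τ ≤ ps x := fun x => (hpos x).1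
  set I : Ω → ℝ := fun ω => if A ω = a then 1 else 0
  have hI : AEStronglyMeasurable I P :=
    (Measurable.ite (hA (measurableSet_singleton a)) measurable_const
      measurable_const).aestronglyMeasurable
  have hIb : ∀ᵐ ω ∂P, ‖I ω‖ ≤ 1 := ae_of_all _ fun ω => by by_cases h : A ω = a <;> simp [I, h]
  have hIidem : ∀ ω, I ω * I ω = I ω := fun ω => by by_cases h : A ω = a <;> simp [I, h]
  have hg : Measurable fun x => Q x - Qref x := hQm.sub hQrefm
  have hgb : ∀ ω, ‖Q (X ω) - Qref (X ω)‖ ≤ M + Mref := fun ω =>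
    (abs_sub _ _).trans (add_le_add (hQb _) (hQrefb _))
  have hgX : Integrable (fun ω => Q (X ω) - Qref (X ω)) P :=
    .of_bound (hg.comp hX).aestronglyMeasurable _ (ae_of_all _ hgb)
  have hg2X : Integrable (fun ω => (Q (X ω) - Qref (X ω)) ^ 2) P := by
    simpa only [sq] using hgX.bdd_mul hgX.aestronglyMeasurable (ae_of_all _ hgb)
  have hsq : ∫ ω, Haipw ps a Qref Q (X ω, A ω, Y ω) ^ 2 ∂P
      = ∫ ω, (1 - ps (X ω)) / ps (X ω) * (Q (X ω) - Qref (X ω)) ^ 2 ∂P := by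
    simp only [Haipw, mul_pow]
    exact integral_one_sub_div_sq_mul_eq (φ := fun x => (Q x - Qref x) ^ 2) hX hps hτ hpsτ hI hIb
      hIidem hprop (hg.pow_const 2) hg2X
  have hbounds := integral_one_sub_div_mul_mem_Icc hg2X (fun ω => sq_nonneg _) (hps.comp hX) hτ
    fun ω => hpos (X ω)
  exact ⟨integral_one_sub_div_mul_eq_zero hX hps hτ hpsτ hI hIb hprop hg hgX, hsq,
    hsq ▸ hbounds.1, hsq ▸ hbounds.2⟩

/-- **Mean and variance of `H(Q)(V)`** (Lemma S4).
In the randomized-trial setup with known propensity score `π` bounded in `[τ, 1−τ]`,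
for every bounded measurable `Q`:
`E[H(Q)(V)] = 0`, `E[H(Q)(V)²] = E[((1−π(X))/π(X))·(Q(X) − Q_#(X))²]`, and
`(τ/(1−τ))·‖Q − Q_#‖₂² ≤ E[H(Q)(V)²] ≤ ((1−τ)/τ)·‖Q − Q_#‖₂²`. -/
theorem H_mean_var {𝒳 Ω : Type*} [MeasurableSpace 𝒳] [MeasurableSpace Ω]
    (P : Measure Ω) [IsProbabilityMeasure P]
    (X : Ω → 𝒳) (A : Ω → Bool) (Y : Ω → ℝ)
    (hX : Measurable X) (hA : Measurable A) (hY : Measurable Y)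
    (a : Bool) (ps : 𝒳 → ℝ) (hps : Measurable ps)
    (τ : ℝ) (hτ : 0 < τ) (hτ' : τ ≤ 1 / 2)
    (hpos : ∀ x, τ ≤ ps x ∧ ps x ≤ 1 - τ)
    (hprop : P[(fun ω => if A ω = a then (1 : ℝ) else 0) |
        MeasurableSpace.comap X inferInstance] =ᵐ[P] fun ω => ps (X ω))
    (Qref : 𝒳 → ℝ) (hQrefm : Measurable Qref)
    (Mref : ℝ) (hQrefb : ∀ x, |Qref x| ≤ Mref)
    (Q : 𝒳 → ℝ) (hQm : Measurable Q) (M : ℝ) (hQb : ∀ x, |Q x| ≤ M) :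
    (∫ ω, Haipw ps a Qref Q (X ω, A ω, Y ω) ∂P) = 0 ∧
    (∫ ω, (Haipw ps a Qref Q (X ω, A ω, Y ω)) ^ 2 ∂P)
      = (∫ ω, ((1 - ps (X ω)) / ps (X ω)) * (Q (X ω) - Qref (X ω)) ^ 2 ∂P) ∧
    (τ / (1 - τ)) * (∫ ω, (Q (X ω) - Qref (X ω)) ^ 2 ∂P)
      ≤ (∫ ω, (Haipw ps a Qref Q (X ω, A ω, Y ω)) ^ 2 ∂P) ∧
    (∫ ω, (Haipw ps a Qref Q (X ω, A ω, Y ω)) ^ 2 ∂P)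
      ≤ ((1 - τ) / τ) * (∫ ω, (Q (X ω) - Qref (X ω)) ^ 2 ∂P) :=
  H_mean_var_general P X A Y hX hA a ps hps τ hτ hpos hprop Qref hQrefm Mref hQrefb Q hQm M hQb
end
end

section
/- Assume E[Y²] < ∞. Then for every bounded measurable Q : 𝒳 → ℝ: P_*(T(Q)² − T(Q_#)²) = E[((1 − π(X))/π(X))·(Q(X) − Q_#(X))²] + 2·E[((1 − π(X))/π(X))·(Q(X) − Q_#(X))·(Q_#(X) − Q_*(X))]. -/
/-!
Write `I = 1{A = a}`. Since `I² = I`, the difference `T(Q)² − T(Q_#)²` equals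
`c₀(X) + c₁(X)·I + c₂(X)·I·Y` with coefficients polynomial in `Q`, `Q_#` and `1/π`, hence bounded
because `π ≥ τ`. Conditioning on `X` replaces `I` by `π(X)` and `I·Y` by `π(X)·Q_*(X)`, after which
the integrand is pointwise `((1 − π)/π)·(Q − Q_#)·((Q − Q_#) + 2(Q_# − Q_*))`.
-/

open MeasureTheory ProbabilityTheory

noncomputable section

open Asymptotics Filter

lemma isBigO_top_inv_of_le {α : Type*} {f : α → ℝ} {τ : ℝ} (hτ : 0 < τ) (hf : ∀ x, τ ≤ f x) :
    (fun x => (f x)⁻¹) =O[⊤] fun _ => (1 : ℝ) :=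
  isBigO_of_le' (c := τ⁻¹) ⊤ fun x => by
    simpa [abs_of_pos (hτ.trans_le (hf x))] using inv_anti₀ hτ (hf x)

section CondExpPullOut

variable {𝒳 Ω : Type*} [MeasurableSpace 𝒳] {mΩ : MeasurableSpace Ω}
  {P : Measure Ω} {X : Ω → 𝒳}

lemma MeasureTheory.Integrable.comp_bdd_mul (hX : Measurable X) {f : 𝒳 → ℝ} (hf : Measurable f)
    (hfb : f =O[⊤] fun _ => (1 : ℝ)) {g : Ω → ℝ} (hg : Integrable g P) :
    Integrable (fun ω => f (X ω) * g ω) P :=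
  ((hfb.comp_tendsto tendsto_top).mul (isBigO_refl g ⊤)).integrable
    ((hf.comp hX).aestronglyMeasurable.mul hg.aestronglyMeasurable) (by simpa using hg)

lemma integral_comp_mul_eq_of_condExp_eq [IsFiniteMeasure P] (hX : Measurable X) {f : 𝒳 → ℝ}
    (hf : Measurable f) (hfb : f =O[⊤] fun _ => (1 : ℝ)) {g : Ω → ℝ} (hg : Integrable g P)
    {h : 𝒳 → ℝ} (hgh : P[g | MeasurableSpace.comap X inferInstance] =ᵐ[P] fun ω => h (X ω)) :
    ∫ ω, f (X ω) * g ω ∂P = ∫ ω, f (X ω) * h (X ω) ∂P := by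
  have hfX : StronglyMeasurable[MeasurableSpace.comap X inferInstance] (fun ω => f (X ω)) :=
    (hf.comp (comap_measurable X)).stronglyMeasurable
  calc ∫ ω, f (X ω) * g ω ∂P
      = ∫ ω, (P[fun ω => f (X ω) * g ω | MeasurableSpace.comap X inferInstance]) ω ∂P :=
        (integral_condExp hX.comap_le).symm
    _ = ∫ ω, f (X ω) * h (X ω) ∂P := integral_congr_ae <|
        (condExp_mul_of_stronglyMeasurable_left hfX (hg.comp_bdd_mul hX hf hfb) hg).trans
          (hgh.mono fun ω hω => by simp only [Pi.mul_apply, hω])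

lemma integrable_comp_of_isBigO_one [IsFiniteMeasure P] (hX : Measurable X) {f : 𝒳 → ℝ}
    (hf : Measurable f) (hfb : f =O[⊤] fun _ => (1 : ℝ)) :
    Integrable (fun ω => f (X ω)) P := by
  simpa only [mul_one] using (integrable_const (1 : ℝ)).comp_bdd_mul hX hf hfb

lemma integral_add_comp_mul_add_comp_mul_of_condExp_eq [IsFiniteMeasure P] (hX : Measurable X)
    {F : Ω → ℝ} (hF : Integrable F P) {c₁ c₂ : 𝒳 → ℝ} (hc₁ : Measurable c₁)
    (hc₂ : Measurable c₂) (hc₁b : c₁ =O[⊤] fun _ => (1 : ℝ))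
    (hc₂b : c₂ =O[⊤] fun _ => (1 : ℝ)) {g₁ g₂ : Ω → ℝ} (hg₁ : Integrable g₁ P)
    (hg₂ : Integrable g₂ P) {h₁ h₂ : 𝒳 → ℝ}
    (hgh₁ : P[g₁ | MeasurableSpace.comap X inferInstance] =ᵐ[P] fun ω => h₁ (X ω))
    (hgh₂ : P[g₂ | MeasurableSpace.comap X inferInstance] =ᵐ[P] fun ω => h₂ (X ω)) :
    ∫ ω, F ω + c₁ (X ω) * g₁ ω + c₂ (X ω) * g₂ ω ∂P
      = ∫ ω, F ω + c₁ (X ω) * h₁ (X ω) + c₂ (X ω) * h₂ (X ω) ∂P := by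
  have hh₁ := (integrable_condExp.congr hgh₁).comp_bdd_mul hX hc₁ hc₁b
  have hh₂ := (integrable_condExp.congr hgh₂).comp_bdd_mul hX hc₂ hc₂b
  have hg₁' := hg₁.comp_bdd_mul hX hc₁ hc₁b
  have hg₂' := hg₂.comp_bdd_mul hX hc₂ hc₂b
  rw [integral_add (f := fun ω => F ω + c₁ (X ω) * g₁ ω) (hF.add hg₁') hg₂', integral_add hF hg₁',
    integral_add (f := fun ω => F ω + c₁ (X ω) * h₁ (X ω)) (hF.add hh₁) hh₂,
    integral_add hF hh₁, integral_comp_mul_eq_of_condExp_eq hX hc₁ hc₁b hg₁ hgh₁,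
    integral_comp_mul_eq_of_condExp_eq hX hc₂ hc₂b hg₂ hgh₂]

lemma integrable_comp_of_condExp_eq_mul (hX : Measurable X) {ps : 𝒳 → ℝ} (hps : Measurable ps)
    {τ : ℝ} (hτ : 0 < τ) (hps_ge : ∀ x, τ ≤ ps x) {g : Ω → ℝ} {h : 𝒳 → ℝ}
    (hgh : P[g | MeasurableSpace.comap X inferInstance] =ᵐ[P] fun ω => ps (X ω) * h (X ω)) :
    Integrable (fun ω => h (X ω)) P :=
  ((integrable_condExp.congr hgh).comp_bdd_mul hX hps.inv (isBigO_top_inv_of_le hτ hps_ge)).congr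
    (ae_of_all _ fun _ => inv_mul_cancel_left₀ (hτ.trans_le (hps_ge _)).ne' _)

end CondExpPullOut

lemma Taipw_sq_sub_Taipw_sq {𝒳 : Type*} (ps : 𝒳 → ℝ) (a : Bool) (Q Q' : 𝒳 → ℝ) {x : 𝒳}
    (hx : ps x ≠ 0) (b : Bool) (y : ℝ) :
    Taipw ps a Q (x, b, y) ^ 2 - Taipw ps a Q' (x, b, y) ^ 2
      = (Q x ^ 2 - Q' x ^ 2)
        + ((ps x)⁻¹ ^ 2 - 2 * (ps x)⁻¹) * (Q x ^ 2 - Q' x ^ 2) * (if b = a then 1 else 0)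
        + 2 * ((ps x)⁻¹ - (ps x)⁻¹ ^ 2) * (Q x - Q' x) * ((if b = a then 1 else 0) * y) := by
  unfold Taipw
  split_ifs <;> field_simp <;> ring

section AIPW

variable {𝒳 Ω : Type*} [MeasurableSpace 𝒳] {mΩ : MeasurableSpace Ω} {P : Measure Ω}
  [IsFiniteMeasure P] {X : Ω → 𝒳} {A : Ω → Bool} {Y : Ω → ℝ} {a : Bool} {ps : 𝒳 → ℝ} {τ : ℝ}

lemma integrable_ite_eq_one_zero (hA : Measurable A) :
    Integrable (fun ω => if A ω = a then (1 : ℝ) else 0) P :=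
  (integrable_const (1 : ℝ)).mono
    ((measurable_const.ite (hA (measurableSet_singleton a)) measurable_const).aestronglyMeasurable)
    (ae_of_all _ fun _ => by split_ifs <;> simp)

lemma integrable_ite_eq_one_zero_mul (hA : Measurable A) (hY : Integrable Y P) :
    Integrable (fun ω => (if A ω = a then (1 : ℝ) else 0) * Y ω) P :=
  hY.bdd_mul (c := 1) (integrable_ite_eq_one_zero hA).aestronglyMeasurable
    (ae_of_all _ fun _ => by split_ifs <;> simp)

variable (hX : Measurable X) (hA : Measurable A) (hY : Integrable Y P) (hps : Measurable ps)
  (hτ : 0 < τ) (hps_ge : ∀ x, τ ≤ ps x)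
  (hprop : P[(fun ω => if A ω = a then (1 : ℝ) else 0) |
    MeasurableSpace.comap X inferInstance] =ᵐ[P] fun ω => ps (X ω))
  {Qstar : 𝒳 → ℝ}
  (houtcome : P[(fun ω => (if A ω = a then (1 : ℝ) else 0) * Y ω) |
    MeasurableSpace.comap X inferInstance] =ᵐ[P] fun ω => ps (X ω) * Qstar (X ω))
  {Q Q' : 𝒳 → ℝ} (hQm : Measurable Q) (hQ'm : Measurable Q')
  (hQ : Q =O[⊤] fun _ => (1 : ℝ)) (hQ' : Q' =O[⊤] fun _ => (1 : ℝ))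
include hX hA hY hps hτ hps_ge hprop houtcome hQm hQ'm hQ hQ'

lemma integral_Taipw_sq_sub_Taipw_sq_eq_integral :
    ∫ ω, Taipw ps a Q (X ω, A ω, Y ω) ^ 2 - Taipw ps a Q' (X ω, A ω, Y ω) ^ 2 ∂P
      = ∫ ω, (1 - ps (X ω)) / ps (X ω) * (Q (X ω) - Q' (X ω)) ^ 2
          + 2 * ((1 - ps (X ω)) / ps (X ω) * (Q (X ω) - Q' (X ω))
            * (Q' (X ω) - Qstar (X ω))) ∂P := by
  have hps0 : ∀ x, ps x ≠ 0 := fun x => (hτ.trans_le (hps_ge x)).ne'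
  have hinv := isBigO_top_inv_of_le hτ hps_ge
  have hinv2 : (fun x => (ps x)⁻¹ ^ 2) =O[⊤] fun _ => (1 : ℝ) := by simpa using hinv.pow 2
  calc _ = ∫ ω, (Q (X ω) ^ 2 - Q' (X ω) ^ 2)
          + ((ps (X ω))⁻¹ ^ 2 - 2 * (ps (X ω))⁻¹) * (Q (X ω) ^ 2 - Q' (X ω) ^ 2)
            * (if A ω = a then 1 else 0)
          + 2 * ((ps (X ω))⁻¹ - (ps (X ω))⁻¹ ^ 2) * (Q (X ω) - Q' (X ω))
            * ((if A ω = a then 1 else 0) * Y ω) ∂P :=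
        integral_congr_ae <| ae_of_all _ fun ω =>
          Taipw_sq_sub_Taipw_sq ps a Q Q' (hps0 _) (A ω) (Y ω)
    _ = ∫ ω, (Q (X ω) ^ 2 - Q' (X ω) ^ 2)
          + ((ps (X ω))⁻¹ ^ 2 - 2 * (ps (X ω))⁻¹) * (Q (X ω) ^ 2 - Q' (X ω) ^ 2) * ps (X ω)
          + 2 * ((ps (X ω))⁻¹ - (ps (X ω))⁻¹ ^ 2) * (Q (X ω) - Q' (X ω))
            * (ps (X ω) * Qstar (X ω)) ∂P :=
        integral_add_comp_mul_add_comp_mul_of_condExp_eq hX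
          (c₁ := fun x => ((ps x)⁻¹ ^ 2 - 2 * (ps x)⁻¹) * (Q x ^ 2 - Q' x ^ 2))
          (c₂ := fun x => 2 * ((ps x)⁻¹ - (ps x)⁻¹ ^ 2) * (Q x - Q' x))
          (h₂ := fun x => ps x * Qstar x)
          (integrable_comp_of_isBigO_one hX (f := fun x => Q x ^ 2 - Q' x ^ 2) (by fun_prop)
            (by simpa using (hQ.pow 2).sub (hQ'.pow 2)))
          (by fun_prop) (by fun_prop)
          (by simpa using (hinv2.sub (hinv.const_mul_left 2)).mul ((hQ.pow 2).sub (hQ'.pow 2)))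
          (by simpa using ((hinv.sub hinv2).const_mul_left 2).mul (hQ.sub hQ'))
          (integrable_ite_eq_one_zero hA) (integrable_ite_eq_one_zero_mul hA hY) hprop houtcome
    _ = _ := integral_congr_ae <| ae_of_all _ fun ω => by field_simp [hps0 (X ω)]; ring

lemma integral_Taipw_sq_sub_Taipw_sq :
    ∫ ω, Taipw ps a Q (X ω, A ω, Y ω) ^ 2 - Taipw ps a Q' (X ω, A ω, Y ω) ^ 2 ∂P
      = ∫ ω, (1 - ps (X ω)) / ps (X ω) * (Q (X ω) - Q' (X ω)) ^ 2 ∂P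
        + 2 * ∫ ω, (1 - ps (X ω)) / ps (X ω) * (Q (X ω) - Q' (X ω))
            * (Q' (X ω) - Qstar (X ω)) ∂P := by
  have hodds : (fun x => (1 - ps x) / ps x) =O[⊤] fun _ => (1 : ℝ) :=
    ((isBigO_top_inv_of_le hτ hps_ge).sub (isBigO_refl _ ⊤)).congr_left fun x => by
      field_simp [(hτ.trans_le (hps_ge x)).ne']
  have hsq := integrable_comp_of_isBigO_one (P := P) hX
    (f := fun x => (1 - ps x) / ps x * (Q x - Q' x) ^ 2) (by fun_prop)
    (by simpa using hodds.mul ((hQ.sub hQ').pow 2))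
  have hcross := ((integrable_comp_of_isBigO_one hX hQ'm hQ').sub
    (integrable_comp_of_condExp_eq_mul hX hps hτ hps_ge houtcome)).comp_bdd_mul hX
      (g := fun ω => Q' (X ω) - Qstar (X ω)) (f := fun x => (1 - ps x) / ps x * (Q x - Q' x))
      (by fun_prop) (by simpa using hodds.mul (hQ.sub hQ'))
  rw [integral_Taipw_sq_sub_Taipw_sq_eq_integral hX hA hY hps hτ hps_ge hprop houtcome hQm hQ'm
    hQ hQ', integral_add hsq (hcross.const_mul 2), integral_const_mul]

end AIPW

theorem expected_diff_squared_transform_general {𝒳 Ω : Type*}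
    [MeasurableSpace 𝒳] [MeasurableSpace Ω]
    (P : Measure Ω) [IsProbabilityMeasure P]
    (X : Ω → 𝒳) (A : Ω → Bool) (Y : Ω → ℝ)
    (hX : Measurable X) (hA : Measurable A) (hY : Measurable Y)
    (a : Bool) (ps : 𝒳 → ℝ) (hps : Measurable ps)
    (τ : ℝ) (hτ : 0 < τ)
    (hpos : ∀ x, τ ≤ ps x ∧ ps x ≤ 1 - τ)
    (hprop : P[(fun ω => if A ω = a then (1 : ℝ) else 0) |
        MeasurableSpace.comap X inferInstance] =ᵐ[P] fun ω => ps (X ω))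
    (Qstar : 𝒳 → ℝ)
    (houtcome : P[(fun ω => (if A ω = a then (1 : ℝ) else 0) * Y ω) |
        MeasurableSpace.comap X inferInstance] =ᵐ[P] fun ω => ps (X ω) * Qstar (X ω))
    (hY2 : Integrable (fun ω => (Y ω) ^ 2) P)
    (Qref : 𝒳 → ℝ) (hQrefm : Measurable Qref)
    (Mref : ℝ) (hQrefb : ∀ x, |Qref x| ≤ Mref)
    (Q : 𝒳 → ℝ) (hQm : Measurable Q) (M : ℝ) (hQb : ∀ x, |Q x| ≤ M) :
    (∫ ω, ((Taipw ps a Q (X ω, A ω, Y ω)) ^ 2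
        - (Taipw ps a Qref (X ω, A ω, Y ω)) ^ 2) ∂P)
      = (∫ ω, ((1 - ps (X ω)) / ps (X ω)) * (Q (X ω) - Qref (X ω)) ^ 2 ∂P)
        + 2 * (∫ ω, ((1 - ps (X ω)) / ps (X ω)) * (Q (X ω) - Qref (X ω))
            * (Qref (X ω) - Qstar (X ω)) ∂P) :=
  integral_Taipw_sq_sub_Taipw_sq hX hA
    (((memLp_two_iff_integrable_sq hY.aestronglyMeasurable).2 hY2).integrable one_le_two) hps hτ
    (fun x => (hpos x).1) hprop houtcome hQm hQrefm
    (isBigO_of_le' (c := M) ⊤ fun x => by simpa using hQb x)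
    (isBigO_of_le' (c := Mref) ⊤ fun x => by simpa using hQrefb x)

/-- **Expected difference of squared transformations** (from Lemma S5).
In the randomized-trial setup, if `E[Y²] < ∞`, then for every bounded measurable `Q`:
`P_*(T(Q)² − T(Q_#)²) = E[((1−π(X))/π(X))·(Q(X) − Q_#(X))²]
  + 2·E[((1−π(X))/π(X))·(Q(X) − Q_#(X))·(Q_#(X) − Q_*(X))]`. -/
theorem expected_diff_squared_transform {𝒳 Ω : Type*}
    [MeasurableSpace 𝒳] [MeasurableSpace Ω]
    (P : Measure Ω) [IsProbabilityMeasure P]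
    (X : Ω → 𝒳) (A : Ω → Bool) (Y : Ω → ℝ)
    (hX : Measurable X) (hA : Measurable A) (hY : Measurable Y)
    (a : Bool) (ps : 𝒳 → ℝ) (hps : Measurable ps)
    (τ : ℝ) (hτ : 0 < τ) (hτ' : τ ≤ 1 / 2)
    (hpos : ∀ x, τ ≤ ps x ∧ ps x ≤ 1 - τ)
    (hprop : P[(fun ω => if A ω = a then (1 : ℝ) else 0) |
        MeasurableSpace.comap X inferInstance] =ᵐ[P] fun ω => ps (X ω))
    (Qstar : 𝒳 → ℝ) (hQstarm : Measurable Qstar)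
    (houtcome : P[(fun ω => (if A ω = a then (1 : ℝ) else 0) * Y ω) |
        MeasurableSpace.comap X inferInstance] =ᵐ[P] fun ω => ps (X ω) * Qstar (X ω))
    (hY2 : Integrable (fun ω => (Y ω) ^ 2) P)
    (Qref : 𝒳 → ℝ) (hQrefm : Measurable Qref)
    (Mref : ℝ) (hQrefb : ∀ x, |Qref x| ≤ Mref)
    (Q : 𝒳 → ℝ) (hQm : Measurable Q) (M : ℝ) (hQb : ∀ x, |Q x| ≤ M) :
    (∫ ω, ((Taipw ps a Q (X ω, A ω, Y ω)) ^ 2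
        - (Taipw ps a Qref (X ω, A ω, Y ω)) ^ 2) ∂P)
      = (∫ ω, ((1 - ps (X ω)) / ps (X ω)) * (Q (X ω) - Qref (X ω)) ^ 2 ∂P)
        + 2 * (∫ ω, ((1 - ps (X ω)) / ps (X ω)) * (Q (X ω) - Qref (X ω))
            * (Qref (X ω) - Qstar (X ω)) ∂P) :=
  expected_diff_squared_transform_general P X A Y hX hA hY a ps hps τ hτ hpos hprop Qstar houtcome
    hY2 Qref hQrefm Mref hQrefb Q hQm M hQb
end
end

section
/- Exact decomposition of the bias of the non-cross-fit plug-in variance estimator under projection conditions. In the non-cross-fit setup, assume |Q̃| ≤ M almost surely and |Q_#| ≤ M for a constant M > 0, and assume the projection conditions: almost surely P_n( (1{A=a}/π(X))·(Y − Q̃(X))·Q̃(X) ) = 0, and E( (1{A=a}/π(X))·(Y − Q_#(X))·Q_#(X) ) = 0. Then σ_†² − σ_#² = E[ P_n( (1{A=a}/π(X)²)·( (Y − Q̃(X))² − (Y − Q_#(X))² ) ) ] + E[ P_n( Q̃(X)² − Q_#(X)² ) ] − ( E[ψ̃²] − ψ_*² ), where the subtracted term E[ψ̃²] − ψ_*²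 is the paper's nonnegative order-n^{−1} term. -/
/-!
Write `T(Q) = R(Q) + Q` with `R(Q) = 1{A=a}·(Y − Q(X))/π(X)`. The indicator is idempotent, so
`R(Q)² = 1{A=a}·(Y − Q(X))²/π(X)²`, and `T(Q)² = R(Q)² + 2·R(Q)·Q + Q²`. The projection conditions
say that the cross term `R(Q)·Q` has mean zero, empirically for `Q̃` and in population for `Q_#`.
Hence almost surely `σ̃² = P_n R(Q̃)² + P_n Q̃² − ψ̃²`, and `σ_#² = P R(Q_#)² + P Q_#² − ψ_*²`
because `P T(Q_#) = ψ_*`, which holds for every bounded `Q_#` by conditioning on `X`.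
Taking expectations, with `E[P_n f] = P f` for a fixed integrable `f`, gives the identity.
Every term is integrable since `Y ∈ L²` and `1/π`, `Q̃`, `Q_#` are bounded.
-/

open MeasureTheory ProbabilityTheory

noncomputable section

/-- The centered transformation `D(Q, ψ) = T(Q) − ψ`. -/
def Daipw {𝒳 : Type*} (ps : 𝒳 → ℝ) (a : Bool) (Q : 𝒳 → ℝ) (ψ : ℝ)
    (v : 𝒳 × Bool × ℝ) : ℝ :=
  Taipw ps a Q v - ψ

lemma mean_sub_mean_sq_eq {n : ℕ} (t : Fin n → ℝ) :
    (n : ℝ)⁻¹ * ∑ i, (t i - (n : ℝ)⁻¹ * ∑ j, t j) ^ 2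
      = (n : ℝ)⁻¹ * ∑ i, t i ^ 2 - ((n : ℝ)⁻¹ * ∑ i, t i) ^ 2 := by
  rcases eq_or_ne n 0 with rfl | hn
  · simp
  simp only [sub_sq, Finset.sum_add_distrib, Finset.sum_sub_distrib, ← Finset.sum_mul,
    ← Finset.mul_sum, Finset.sum_const, Finset.card_univ, Fintype.card_fin, nsmul_eq_mul]
  field_simp
  ring

lemma mean_sub_mean_sq_eq_of_orthogonal {n : ℕ} (t q : Fin n → ℝ)
    (h : (n : ℝ)⁻¹ * ∑ i, (t i - q i) * q i = 0) :
    (n : ℝ)⁻¹ * ∑ i, (t i - (n : ℝ)⁻¹ * ∑ j, t j) ^ 2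
      = (n : ℝ)⁻¹ * ∑ i, (t i - q i) ^ 2 + (n : ℝ)⁻¹ * ∑ i, q i ^ 2
        - ((n : ℝ)⁻¹ * ∑ i, t i) ^ 2 := by
  have hsq : ∀ i, t i ^ 2 = (t i - q i) ^ 2 + 2 * ((t i - q i) * q i) + q i ^ 2 :=
    fun i => by ring
  rw [mean_sub_mean_sq_eq, Finset.sum_congr rfl fun i _ => hsq i, Finset.sum_add_distrib,
    Finset.sum_add_distrib, ← Finset.mul_sum]
  linear_combination 2 * h

lemma integral_sub_integral_sq_eq_of_orthogonal {α : Type*} [MeasurableSpace α] {μ : Measure α}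
    [IsProbabilityMeasure μ] {f g : α → ℝ} (hf : MemLp f 2 μ) (hg : MemLp g 2 μ)
    (h : ∫ x, (f x - g x) * g x ∂μ = 0) :
    ∫ x, (f x - ∫ y, f y ∂μ) ^ 2 ∂μ
      = ∫ x, (f x - g x) ^ 2 ∂μ + ∫ x, g x ^ 2 ∂μ - (∫ x, f x ∂μ) ^ 2 := by
  have hfg : MemLp (fun x => f x - g x) 2 μ := hf.sub hg
  have hcross : Integrable (fun x => (f x - g x) * g x) μ := hfg.integrable_mul hg
  have hsq : ∫ x, f x ^ 2 ∂μ = ∫ x, (f x - g x) ^ 2 ∂μ + ∫ x, g x ^ 2 ∂μ := by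
    calc ∫ x, f x ^ 2 ∂μ
        = ∫ x, ((f x - g x) ^ 2 + 2 * ((f x - g x) * g x) + g x ^ 2) ∂μ :=
          integral_congr_ae (.of_forall fun x => by ring)
      _ = _ := by
          rw [integral_add, integral_add, integral_const_mul, h]
          · ring
          exacts [hfg.integrable_sq, hcross.const_mul 2,
            hfg.integrable_sq.add (hcross.const_mul 2), hg.integrable_sq]
  rw [← variance_eq_integral hf.aemeasurable, variance_eq_sub hf, ← hsq]
  rfl

lemma integral_comp_fst_mul_eq_of_condExp_ae_eq {𝒳 𝒴 : Type*} [MeasurableSpace 𝒳]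
    [MeasurableSpace 𝒴] {ν : Measure (𝒳 × 𝒴)} [IsFiniteMeasure ν] {f F : 𝒳 × 𝒴 → ℝ}
    (hf : Integrable f ν) (hF : ν[f | MeasurableSpace.comap Prod.fst inferInstance] =ᵐ[ν] F)
    {g : 𝒳 → ℝ} (hg : Measurable g) {c : ℝ} (hgc : ∀ x, |g x| ≤ c) :
    ∫ v, g v.1 * f v ∂ν = ∫ v, g v.1 * F v ∂ν := by
  have hm : MeasurableSpace.comap (Prod.fst : 𝒳 × 𝒴 → 𝒳) inferInstance
      ≤ Prod.instMeasurableSpace := measurable_fst.comap_le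
  have hg' : StronglyMeasurable[MeasurableSpace.comap Prod.fst inferInstance]
      (fun v : 𝒳 × 𝒴 => g v.1) :=
    (hg.comp (Measurable.of_comap_le le_rfl)).stronglyMeasurable
  have hpull := condExp_stronglyMeasurable_mul_of_bound hm hg' hf c (.of_forall fun v => hgc v.1)
  calc ∫ v, g v.1 * f v ∂ν
      = ∫ v, (ν[(fun v : 𝒳 × 𝒴 => g v.1) * f | MeasurableSpace.comap Prod.fst inferInstance]) v
          ∂ν :=
        (integral_condExp hm).symm
    _ = ∫ v, g v.1 * F v ∂ν := integral_congr_ae (hpull.trans (hF.mono fun v hv => by simp [hv]))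

lemma abs_div_le_div_of_le {𝒳 : Type*} {ps g : 𝒳 → ℝ} {τ c : ℝ} (hτ : 0 < τ)
    (hpsτ : ∀ x, τ ≤ ps x) (hgc : ∀ x, |g x| ≤ c) (x : 𝒳) :
    |g x / ps x| ≤ c / τ := by
  rw [abs_div, abs_of_pos (hτ.trans_le (hpsτ x))]
  exact div_le_div₀ ((abs_nonneg _).trans (hgc x)) (hgc x) hτ (hpsτ x)

section InverseWeighting

variable {𝒳 𝒴 : Type*} [MeasurableSpace 𝒳] [MeasurableSpace 𝒴] {ν : Measure (𝒳 × 𝒴)}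
  {ps : 𝒳 → ℝ} {τ : ℝ}

lemma integrable_div_mul (hps : Measurable ps) (hτ : 0 < τ) (hpsτ : ∀ x, τ ≤ ps x)
    {f : 𝒳 × 𝒴 → ℝ} (hf : Integrable f ν) {g : 𝒳 → ℝ} (hg : Measurable g) {c : ℝ}
    (hgc : ∀ x, |g x| ≤ c) :
    Integrable (fun v => g v.1 / ps v.1 * f v) ν :=
  hf.bdd_mul ((hg.div hps).comp measurable_fst).aestronglyMeasurable
    (.of_forall fun v => abs_div_le_div_of_le hτ hpsτ hgc v.1)

lemma integral_div_mul_eq_of_condExp_ae_eq [IsFiniteMeasure ν] (hps : Measurable ps) (hτ : 0 < τ)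
    (hpsτ : ∀ x, τ ≤ ps x) {f : 𝒳 × 𝒴 → ℝ} (hf : Integrable f ν) {h : 𝒳 → ℝ}
    (hF : ν[f | MeasurableSpace.comap Prod.fst inferInstance] =ᵐ[ν] fun v => ps v.1 * h v.1)
    {g : 𝒳 → ℝ} (hg : Measurable g) {c : ℝ} (hgc : ∀ x, |g x| ≤ c) :
    ∫ v, g v.1 / ps v.1 * f v ∂ν = ∫ v, g v.1 * h v.1 ∂ν := by
  rw [integral_comp_fst_mul_eq_of_condExp_ae_eq (g := fun x => g x / ps x) hf hF (hg.div hps)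
    (abs_div_le_div_of_le hτ hpsτ hgc)]
  exact integral_congr_ae (.of_forall fun v => by
    field_simp [(hτ.trans_le (hpsτ v.1)).ne'])

end InverseWeighting

section Aipw

variable {𝒳 : Type*} {ps : 𝒳 → ℝ} {a : Bool}

lemma Taipw_sub_self (Q : 𝒳 → ℝ) (v : 𝒳 × Bool × ℝ) :
    Taipw ps a Q v - Q v.1 = (if v.2.1 = a then (1 : ℝ) else 0) / ps v.1 * (v.2.2 - Q v.1) := by
  unfold Taipw; ring

lemma Taipw_sub_self_sq (Q : 𝒳 → ℝ) (v : 𝒳 × Bool × ℝ) :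
    (Taipw ps a Q v - Q v.1) ^ 2
      = (if v.2.1 = a then (1 : ℝ) else 0) / ps v.1 ^ 2 * (v.2.2 - Q v.1) ^ 2 := by
  rw [Taipw_sub_self]; split_ifs <;> ring

lemma abs_Taipw_le {τ M : ℝ} (hτ : 0 < τ) (hps : ∀ x, τ ≤ ps x) {Q : 𝒳 → ℝ}
    {v : 𝒳 × Bool × ℝ} (hQ : |Q v.1| ≤ M) :
    |Taipw ps a Q v| ≤ τ⁻¹ * (|v.2.2| + M) + M := by
  have hweight : |(if v.2.1 = a then (1 : ℝ) else 0) / ps v.1| ≤ τ⁻¹ := by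
    rw [abs_div, abs_of_pos (hτ.trans_le (hps v.1)), ← one_div]
    exact div_le_div₀ zero_le_one (by split_ifs <;> simp) hτ (hps v.1)
  calc |Taipw ps a Q v| = |(Taipw ps a Q v - Q v.1) + Q v.1| := by rw [sub_add_cancel]
    _ ≤ |(if v.2.1 = a then (1 : ℝ) else 0) / ps v.1| * |v.2.2 - Q v.1| + |Q v.1| := by
        rw [Taipw_sub_self, ← abs_mul]; exact abs_add_le _ _
    _ ≤ τ⁻¹ * (|v.2.2| + M) + M := by
        gcongr
        exact (abs_sub _ _).trans (by gcongr)

variable {Ω : Type*} [MeasurableSpace 𝒳] [MeasurableSpace Ω]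

lemma measurable_Taipw_comp (hps : Measurable ps) {Q : Ω → 𝒳 → ℝ}
    (hQ : Measurable (Function.uncurry Q)) {Z : Ω → 𝒳 × Bool × ℝ} (hZ : Measurable Z) :
    Measurable fun ω => Taipw ps a (Q ω) (Z ω) := by
  have hQZ : Measurable fun ω => Q ω (Z ω).1 := hQ.comp (measurable_id.prodMk (by fun_prop))
  have hind : Measurable fun ω => if (Z ω).2.1 = a then (1 : ℝ) else 0 :=
    Measurable.ite (hZ.snd.fst (measurableSet_singleton a)) measurable_const measurable_const
  unfold Taipw
  fun_prop

lemma memLp_Taipw_comp {P : Measure Ω} [IsFiniteMeasure P] {ν : Measure (𝒳 × Bool × ℝ)}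
    (hps : Measurable ps) {τ M : ℝ} (hτ : 0 < τ) (hpsτ : ∀ x, τ ≤ ps x) {Q : Ω → 𝒳 → ℝ}
    (hQ : Measurable (Function.uncurry Q)) (hQb : ∀ᵐ ω ∂P, ∀ x, |Q ω x| ≤ M)
    {Z : Ω → 𝒳 × Bool × ℝ} (hZ : Measurable Z) (hlaw : P.map Z = ν)
    (hY : MemLp (fun v : 𝒳 × Bool × ℝ => v.2.2) 2 ν) :
    MemLp (fun ω => Taipw ps a (Q ω) (Z ω)) 2 P := by
  have hYZ : MemLp (fun ω => (Z ω).2.2) 2 P := (hlaw ▸ hY).comp_of_map hZ.aemeasurable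
  refine (((hYZ.norm.add (memLp_const M)).const_mul τ⁻¹).add (memLp_const M)).of_le
    (measurable_Taipw_comp hps hQ hZ).aestronglyMeasurable ?_
  filter_upwards [hQb] with ω hω
  simp only [Real.norm_eq_abs, Pi.add_apply]
  exact (abs_Taipw_le hτ hpsτ (hω (Z ω).1)).trans (le_abs_self _)

lemma integral_Taipw_eq {ν : Measure (𝒳 × Bool × ℝ)} [IsFiniteMeasure ν] (hps : Measurable ps)
    {τ : ℝ} (hτ : 0 < τ) (hpsτ : ∀ x, τ ≤ ps x)
    (hprop : ν[(fun v => if v.2.1 = a then (1 : ℝ) else 0) |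
        MeasurableSpace.comap Prod.fst inferInstance] =ᵐ[ν] fun v => ps v.1)
    {Qstar : 𝒳 → ℝ}
    (houtcome : ν[(fun v => (if v.2.1 = a then (1 : ℝ) else 0) * v.2.2) |
        MeasurableSpace.comap Prod.fst inferInstance] =ᵐ[ν] fun v => ps v.1 * Qstar v.1)
    (hY : Integrable (fun v : 𝒳 × Bool × ℝ => v.2.2) ν) {Q : 𝒳 → ℝ} (hQ : Measurable Q) {M : ℝ}
    (hQb : ∀ x, |Q x| ≤ M) :
    ∫ v, Taipw ps a Q v ∂ν = ∫ v, Qstar v.1 ∂ν := by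
  have hind : Measurable fun v : 𝒳 × Bool × ℝ => if v.2.1 = a then (1 : ℝ) else 0 :=
    Measurable.ite (measurable_snd.fst (measurableSet_singleton a)) measurable_const
      measurable_const
  have hind_le : ∀ v : 𝒳 × Bool × ℝ, ‖if v.2.1 = a then (1 : ℝ) else 0‖ ≤ 1 := fun v => by
    split_ifs <;> simp
  have hindY : Integrable (fun v => (if v.2.1 = a then (1 : ℝ) else 0) * v.2.2) ν :=
    hY.bdd_mul hind.aestronglyMeasurable (.of_forall hind_le)
  have hind_int : Integrable (fun v : 𝒳 × Bool × ℝ => if v.2.1 = a then (1 : ℝ) else 0) ν :=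
    (integrable_const 1).mono' hind.aestronglyMeasurable (.of_forall hind_le)
  have hQ_int : Integrable (fun v : 𝒳 × Bool × ℝ => Q v.1) ν :=
    (integrable_const M).mono' (hQ.comp measurable_fst).aestronglyMeasurable
      (.of_forall fun v => hQb v.1)
  have hone : ∀ x : 𝒳, |(1 : ℝ)| ≤ 1 := fun _ => abs_one.le
  have hIPW := integrable_div_mul hps hτ hpsτ hindY measurable_const hone
  have hcorr := integrable_div_mul hps hτ hpsτ hind_int hQ hQb
  calc ∫ v, Taipw ps a Q v ∂ν
      = ∫ v, (1 / ps v.1 * ((if v.2.1 = a then (1 : ℝ) else 0) * v.2.2)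
          - Q v.1 / ps v.1 * (if v.2.1 = a then (1 : ℝ) else 0) + Q v.1) ∂ν :=
        integral_congr_ae (.of_forall fun v => by unfold Taipw; ring)
    _ = ∫ v, 1 * Qstar v.1 ∂ν - ∫ v, Q v.1 * 1 ∂ν + ∫ v, Q v.1 ∂ν := by
        rw [integral_add (hIPW.sub' hcorr) hQ_int, integral_sub hIPW hcorr,
          integral_div_mul_eq_of_condExp_ae_eq hps hτ hpsτ hindY houtcome measurable_const hone,
          integral_div_mul_eq_of_condExp_ae_eq (h := fun _ => 1) hps hτ hpsτ hind_int
            (hprop.trans (.of_forall fun v => (mul_one (ps v.1)).symm)) hQ hQb]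
    _ = ∫ v, Qstar v.1 ∂ν := by simp only [one_mul, mul_one, sub_add_cancel]

end Aipw

section SampleMean

variable {Ω 𝒱 : Type*} [MeasurableSpace Ω] [MeasurableSpace 𝒱] {P : Measure Ω} {ν : Measure 𝒱}
  {n : ℕ} {V : Fin n → Ω → 𝒱}

lemma integrable_mean {F : Fin n → Ω → ℝ} (hF : ∀ i, Integrable (F i) P) :
    Integrable (fun ω => (n : ℝ)⁻¹ * ∑ i, F i ω) P :=
  (integrable_finsetSum _ fun i _ => hF i).const_mul _

lemma integral_mean_comp (hn : n ≠ 0) (hV : ∀ i, Measurable (V i))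
    (hlaw : ∀ i, P.map (V i) = ν) {f : 𝒱 → ℝ} (hf : Integrable f ν) :
    ∫ ω, (n : ℝ)⁻¹ * ∑ i, f (V i ω) ∂P = ∫ v, f v ∂ν := by
  have hcomp : ∀ i, ∫ ω, f (V i ω) ∂P = ∫ v, f v ∂ν := fun i => by
    rw [← hlaw i, integral_map (hV i).aemeasurable (hlaw i ▸ hf.aestronglyMeasurable)]
  rw [integral_const_mul, integral_finsetSum _ fun i _ => (hlaw i ▸ hf).comp_measurable (hV i)]
  simp only [hcomp, Finset.sum_const, Finset.card_univ, Fintype.card_fin, nsmul_eq_mul]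
  field_simp

lemma integral_mean_sub_comp (hn : n ≠ 0) (hV : ∀ i, Measurable (V i))
    (hlaw : ∀ i, P.map (V i) = ν) {F : Fin n → Ω → ℝ} (hF : ∀ i, Integrable (F i) P)
    {f : 𝒱 → ℝ} (hf : Integrable f ν) :
    ∫ ω, (n : ℝ)⁻¹ * ∑ i, (F i ω - f (V i ω)) ∂P
      = ∫ ω, (n : ℝ)⁻¹ * ∑ i, F i ω ∂P - ∫ v, f v ∂ν := by
  simp only [Finset.sum_sub_distrib, mul_sub]
  rw [integral_sub (integrable_mean hF)
    (integrable_mean fun i => (hlaw i ▸ hf).comp_measurable (hV i)),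
    integral_mean_comp hn hV hlaw hf]

lemma integral_mean_sub_mean_sq_eq_of_orthogonal {t q : Fin n → Ω → ℝ}
    (ht : ∀ i, MemLp (t i) 2 P) (hq : ∀ i, MemLp (q i) 2 P)
    (h : ∀ᵐ ω ∂P, (n : ℝ)⁻¹ * ∑ i, (t i ω - q i ω) * q i ω = 0) :
    ∫ ω, (n : ℝ)⁻¹ * ∑ i, (t i ω - (n : ℝ)⁻¹ * ∑ j, t j ω) ^ 2 ∂P
      = ∫ ω, (n : ℝ)⁻¹ * ∑ i, (t i ω - q i ω) ^ 2 ∂P + ∫ ω, (n : ℝ)⁻¹ * ∑ i, q i ω ^ 2 ∂P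
        - ∫ ω, ((n : ℝ)⁻¹ * ∑ i, t i ω) ^ 2 ∂P := by
  have hresid : Integrable (fun ω => (n : ℝ)⁻¹ * ∑ i, (t i ω - q i ω) ^ 2) P :=
    integrable_mean fun i => ((ht i).sub (hq i)).integrable_sq
  have hfit : Integrable (fun ω => (n : ℝ)⁻¹ * ∑ i, q i ω ^ 2) P :=
    integrable_mean fun i => (hq i).integrable_sq
  have hmean : Integrable (fun ω => ((n : ℝ)⁻¹ * ∑ i, t i ω) ^ 2) P :=
    ((memLp_finsetSum _ fun i _ => ht i).const_mul _).integrable_sq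
  rw [integral_congr_ae (h.mono fun ω hω => mean_sub_mean_sq_eq_of_orthogonal _ _ hω),
    integral_sub (hresid.fun_add hfit) hmean, integral_add hresid hfit]

end SampleMean

theorem noncrossfit_variance_bias_projection_general {𝒳 Ω : Type*}
    [MeasurableSpace 𝒳] [MeasurableSpace Ω]
    (P : Measure Ω) [IsProbabilityMeasure P]
    (ν : Measure (𝒳 × Bool × ℝ)) [IsProbabilityMeasure ν]
    (a : Bool) (ps : 𝒳 → ℝ) (hps : Measurable ps)
    (τ : ℝ) (hτ : 0 < τ)
    (hpos : ∀ x, τ ≤ ps x ∧ ps x ≤ 1 - τ)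
    (hprop : ν[(fun v => if v.2.1 = a then (1 : ℝ) else 0) |
        MeasurableSpace.comap Prod.fst inferInstance] =ᵐ[ν] fun v => ps v.1)
    (Qstar : 𝒳 → ℝ)
    (houtcome : ν[(fun v => (if v.2.1 = a then (1 : ℝ) else 0) * v.2.2) |
        MeasurableSpace.comap Prod.fst inferInstance] =ᵐ[ν] fun v => ps v.1 * Qstar v.1)
    (hY2 : Integrable (fun v : 𝒳 × Bool × ℝ => v.2.2 ^ 2) ν)
    (M : ℝ)
    (Qref : 𝒳 → ℝ) (hQrefm : Measurable Qref) (hQrefb : ∀ x, |Qref x| ≤ M)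
    (n : ℕ) (hn : 0 < n)
    (V : Fin n → Ω → 𝒳 × Bool × ℝ)
    (hVmeas : ∀ i, Measurable (V i))
    (hVlaw : ∀ i, Measure.map (V i) P = ν)
    (Qtilde : Ω → 𝒳 → ℝ) (hQtildem : Measurable (Function.uncurry Qtilde))
    (hQtildeb : ∀ᵐ ω ∂P, ∀ x, |Qtilde ω x| ≤ M)
    (ψs : ℝ) (hψs : ψs = ∫ v, Qstar v.1 ∂ν)
    (ψtilde : Ω → ℝ)
    (hψtilde : ∀ ω, ψtilde ω = (n : ℝ)⁻¹ * ∑ i, Taipw ps a (Qtilde ω) (V i ω))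
    (σtilde2 : Ω → ℝ)
    (hσtilde2 : ∀ ω, σtilde2 ω
      = (n : ℝ)⁻¹ * ∑ i, (Taipw ps a (Qtilde ω) (V i ω) - ψtilde ω) ^ 2)
    (σdag2 : ℝ) (hσdag2 : σdag2 = ∫ ω, σtilde2 ω ∂P)
    (σsharp2 : ℝ) (hσsharp2 : σsharp2 = ∫ v, (Daipw ps a Qref ψs v) ^ 2 ∂ν)
    (hproj1 : ∀ᵐ ω ∂P,
      (n : ℝ)⁻¹ * ∑ i, (if (V i ω).2.1 = a then (1 : ℝ) else 0) / ps (V i ω).1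
          * ((V i ω).2.2 - Qtilde ω (V i ω).1) * Qtilde ω (V i ω).1 = 0)
    (hproj2 : (∫ v, (if v.2.1 = a then (1 : ℝ) else 0) / ps v.1
        * (v.2.2 - Qref v.1) * Qref v.1 ∂ν) = 0) :
    σdag2 - σsharp2
      = (∫ ω, (n : ℝ)⁻¹ * ∑ i, (if (V i ω).2.1 = a then (1 : ℝ) else 0)
            / (ps (V i ω).1) ^ 2
            * (((V i ω).2.2 - Qtilde ω (V i ω).1) ^ 2
              - ((V i ω).2.2 - Qref (V i ω).1) ^ 2) ∂P)
        + (∫ ω, (n : ℝ)⁻¹ * ∑ i, ((Qtilde ω (V i ω).1) ^ 2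
            - (Qref (V i ω).1) ^ 2) ∂P)
        - ((∫ ω, (ψtilde ω) ^ 2 ∂P) - ψs ^ 2) := by
  have hpsτ : ∀ x, τ ≤ ps x := fun x => (hpos x).1
  have hY : MemLp (fun v : 𝒳 × Bool × ℝ => v.2.2) 2 ν :=
    (memLp_two_iff_integrable_sq (by fun_prop)).2 hY2
  have hT : MemLp (Taipw ps a Qref) 2 ν :=
    memLp_Taipw_comp (Q := fun _ => Qref) hps hτ hpsτ (hQrefm.comp measurable_snd)
      (.of_forall fun _ => hQrefb) measurable_id Measure.map_id hY
  have hQ : MemLp (fun v : 𝒳 × Bool × ℝ => Qref v.1) 2 ν :=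
    .of_bound (hQrefm.comp measurable_fst).aestronglyMeasurable M (.of_forall fun v => hQrefb v.1)
  have hTi : ∀ i, MemLp (fun ω => Taipw ps a (Qtilde ω) (V i ω)) 2 P := fun i =>
    memLp_Taipw_comp hps hτ hpsτ hQtildem hQtildeb (hVmeas i) (hVlaw i) hY
  have hQi : ∀ i, MemLp (fun ω => Qtilde ω (V i ω).1) 2 P := fun i =>
    .of_bound (hQtildem.comp (measurable_id.prodMk (hVmeas i).fst)).aestronglyMeasurable M
      (hQtildeb.mono fun ω h => h _)
  have hψ : ∫ v, Taipw ps a Qref v ∂ν = ψs :=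
    (integral_Taipw_eq hps hτ hpsτ hprop houtcome (hY.integrable one_le_two) hQrefm hQrefb).trans
      hψs.symm
  have hσsharp : σsharp2 = ∫ v, (Taipw ps a Qref v - Qref v.1) ^ 2 ∂ν
      + ∫ v, Qref v.1 ^ 2 ∂ν - ψs ^ 2 := by
    rw [hσsharp2, ← hψ]
    exact integral_sub_integral_sq_eq_of_orthogonal hT hQ
      (by simpa only [Taipw_sub_self] using hproj2)
  have hσdag : σdag2 = ∫ ω, (n : ℝ)⁻¹
        * ∑ i, (Taipw ps a (Qtilde ω) (V i ω) - Qtilde ω (V i ω).1) ^ 2 ∂P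
      + ∫ ω, (n : ℝ)⁻¹ * ∑ i, Qtilde ω (V i ω).1 ^ 2 ∂P - ∫ ω, ψtilde ω ^ 2 ∂P := by
    simp only [hσdag2, hσtilde2, hψtilde]
    exact integral_mean_sub_mean_sq_eq_of_orthogonal hTi hQi
      (by simpa only [Taipw_sub_self] using hproj1)
  have hR1 := integral_mean_sub_comp hn.ne' hVmeas hVlaw
    (F := fun i ω => (Taipw ps a (Qtilde ω) (V i ω) - Qtilde ω (V i ω).1) ^ 2)
    (f := fun v => (Taipw ps a Qref v - Qref v.1) ^ 2)
    (fun i => ((hTi i).sub (hQi i)).integrable_sq) (hT.sub hQ).integrable_sq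
  have hR2 := integral_mean_sub_comp hn.ne' hVmeas hVlaw
    (fun i => (hQi i).integrable_sq) (f := fun v => Qref v.1 ^ 2) hQ.integrable_sq
  simp only [Taipw_sub_self_sq, ← mul_sub] at hR1 hσdag hσsharp
  rw [hσdag, hσsharp, hR1, hR2]
  ring

/-- **Exact decomposition of the bias of the non-cross-fit plug-in variance estimator
under projection conditions** (Proposition 2).
In the non-cross-fit setup, if `Q̃` and `Q_#` are projections, i.e. almost surely
`P_n((1{A=a}/π(X))·(Y − Q̃(X))·Q̃(X)) = 0` and
`E((1{A=a}/π(X))·(Y − Q_#(X))·Q_#(X)) = 0`, then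
`σ_†² − σ_#² = E[P_n((1{A=a}/π(X)²)·((Y − Q̃(X))² − (Y − Q_#(X))²))]
  + E[P_n(Q̃(X)² − Q_#(X)²)] − (E[ψ̃²] − ψ_*²)`. -/
theorem noncrossfit_variance_bias_projection {𝒳 Ω : Type*}
    [MeasurableSpace 𝒳] [MeasurableSpace Ω]
    (P : Measure Ω) [IsProbabilityMeasure P]
    (ν : Measure (𝒳 × Bool × ℝ)) [IsProbabilityMeasure ν]
    (a : Bool) (ps : 𝒳 → ℝ) (hps : Measurable ps)
    (τ : ℝ) (hτ : 0 < τ) (hτ' : τ ≤ 1 / 2)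
    (hpos : ∀ x, τ ≤ ps x ∧ ps x ≤ 1 - τ)
    (hprop : ν[(fun v => if v.2.1 = a then (1 : ℝ) else 0) |
        MeasurableSpace.comap Prod.fst inferInstance] =ᵐ[ν] fun v => ps v.1)
    (Qstar : 𝒳 → ℝ) (hQstarm : Measurable Qstar)
    (houtcome : ν[(fun v => (if v.2.1 = a then (1 : ℝ) else 0) * v.2.2) |
        MeasurableSpace.comap Prod.fst inferInstance] =ᵐ[ν] fun v => ps v.1 * Qstar v.1)
    (hY2 : Integrable (fun v : 𝒳 × Bool × ℝ => v.2.2 ^ 2) ν)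
    (M : ℝ) (hM : 0 < M)
    (Qref : 𝒳 → ℝ) (hQrefm : Measurable Qref) (hQrefb : ∀ x, |Qref x| ≤ M)
    (n : ℕ) (hn : 0 < n)
    (V : Fin n → Ω → 𝒳 × Bool × ℝ)
    (hVmeas : ∀ i, Measurable (V i))
    (hViid : iIndepFun V P)
    (hVlaw : ∀ i, Measure.map (V i) P = ν)
    (Qtilde : Ω → 𝒳 → ℝ) (hQtildem : Measurable (Function.uncurry Qtilde))
    (hQtildeb : ∀ᵐ ω ∂P, ∀ x, |Qtilde ω x| ≤ M)
    (ψs : ℝ) (hψs : ψs = ∫ v, Qstar v.1 ∂ν)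
    (ψtilde : Ω → ℝ)
    (hψtilde : ∀ ω, ψtilde ω = (n : ℝ)⁻¹ * ∑ i, Taipw ps a (Qtilde ω) (V i ω))
    (σtilde2 : Ω → ℝ)
    (hσtilde2 : ∀ ω, σtilde2 ω
      = (n : ℝ)⁻¹ * ∑ i, (Taipw ps a (Qtilde ω) (V i ω) - ψtilde ω) ^ 2)
    (σdag2 : ℝ) (hσdag2 : σdag2 = ∫ ω, σtilde2 ω ∂P)
    (σsharp2 : ℝ) (hσsharp2 : σsharp2 = ∫ v, (Daipw ps a Qref ψs v) ^ 2 ∂ν)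
    (hproj1 : ∀ᵐ ω ∂P,
      (n : ℝ)⁻¹ * ∑ i, (if (V i ω).2.1 = a then (1 : ℝ) else 0) / ps (V i ω).1
          * ((V i ω).2.2 - Qtilde ω (V i ω).1) * Qtilde ω (V i ω).1 = 0)
    (hproj2 : (∫ v, (if v.2.1 = a then (1 : ℝ) else 0) / ps v.1
        * (v.2.2 - Qref v.1) * Qref v.1 ∂ν) = 0) :
    σdag2 - σsharp2
      = (∫ ω, (n : ℝ)⁻¹ * ∑ i, (if (V i ω).2.1 = a then (1 : ℝ) else 0)
            / (ps (V i ω).1) ^ 2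
            * (((V i ω).2.2 - Qtilde ω (V i ω).1) ^ 2
              - ((V i ω).2.2 - Qref (V i ω).1) ^ 2) ∂P)
        + (∫ ω, (n : ℝ)⁻¹ * ∑ i, ((Qtilde ω (V i ω).1) ^ 2
            - (Qref (V i ω).1) ^ 2) ∂P)
        - ((∫ ω, (ψtilde ω) ^ 2 ∂P) - ψs ^ 2) :=
  noncrossfit_variance_bias_projection_general P ν a ps hps τ hτ hpos hprop Qstar houtcome hY2 M
    Qref hQrefm hQrefb n hn V hVmeas hVlaw Qtilde hQtildem hQtildeb ψs hψs ψtilde hψtilde σtilde2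
    hσtilde2 σdag2 hσdag2 σsharp2 hσsharp2 hproj1 hproj2
end
end
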